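/- (i) For any ordered pair (ℓ1, ℓ2) of distinct intersecting lines of A_H both lying in BF, and any point A1 on ℓ1 not on ℓ2, there exist μ ∈ F and a collineation φ of A_H such that φ(ℓ1) is the line y = x·(μ,0), φ(ℓ2) is the vertical line x = (0,0), and φ(A1) = ((0,1),(0,μ)). (ii) For any ordered pair (ℓ1, ℓ2) of distinct parallel lines of A_H both lying in BF, and any point A1 on ℓ1, there exist κ ∈ H with κ ≠ (0,0) and a collineation φ of A_H such that φ(ℓ1) is the horizontal line y = κ, φ(ℓ2) is the horizontal line y = (0,0), and φ(A1) = ((0,1), κ). -/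

import Mathlib

open Polynomial

/-- The Hall system multiplication on `F × F`, with defining polynomial `x^2 - r*x - s`. -/
def hallMul {F : Type*} [Field F] [DecidableEq F] (r s : F) (a b : F × F) : F × F :=
  if b.2 = 0 then (a.1 * b.1, a.2 * b.1)
  else (a.1 * b.1 - a.2 * b.2⁻¹ * (b.1 ^ 2 - r * b.1 - s),
        a.1 * b.2 - a.2 * b.1 + a.2 * r)

/-- Vertical line `[c] = {(c, y)}` in the Hall affine plane. -/
def vertLine {F : Type*} (c : F × F) : Set ((F × F) × (F × F)) := {P | P.1 = c}

/-- Non-vertical line `[m, k] = {(x, x·m + k)}` in the Hall affine plane. -/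
def slopeLine {F : Type*} [Field F] [DecidableEq F] (r s : F) (m k : F × F) :
    Set ((F × F) × (F × F)) :=
  {P | P.2 = hallMul r s P.1 m + k}

/-- The lines of the Hall affine plane `A_H`. -/
def IsHallLine {F : Type*} [Field F] [DecidableEq F] (r s : F)
    (ℓ : Set ((F × F) × (F × F))) : Prop :=
  (∃ c : F × F, ℓ = vertLine c) ∨ ∃ m k : F × F, ℓ = slopeLine r s m k

/-- A collineation of the Hall affine plane: a bijection of the point set mapping
every line onto a line. -/
def IsCollineation {F : Type*} [Field F] [DecidableEq F] (r s : F)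
    (φ : (F × F) × (F × F) → (F × F) × (F × F)) : Prop :=
  Function.Bijective φ ∧ ∀ ℓ, IsHallLine r s ℓ → IsHallLine r s (φ '' ℓ)

/-- The BF lines: vertical lines and type 1 lines (slope in the basefield). -/
def BFlines {F : Type*} [Field F] [DecidableEq F] (r s : F) :
    Set (Set ((F × F) × (F × F))) :=
  {ℓ | (∃ c : F × F, ℓ = vertLine c) ∨ ∃ m k : F × F, m.2 = 0 ∧ ℓ = slopeLine r s m k}

/-- The NBF lines: type 2 lines (slope not in the basefield). -/
def NBFlines {F : Type*} [Field F] [DecidableEq F] (r s : F) :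
    Set (Set ((F × F) × (F × F))) :=
  {ℓ | ∃ m k : F × F, m.2 ≠ 0 ∧ ℓ = slopeLine r s m k}

/-!
Right multiplication `x ↦ x·m` of the Hall system is `F`-linear. Its matrix is `μ • 1` for a
type 1 slope `m = (μ, 0)`, and for a type 2 slope it has characteristic polynomial
`X ^ 2 - r X - s`; as this polynomial has no root, every matrix with that characteristic
polynomial occurs. So the lines of `A_H` are the vertical lines and the lines `y = x M + k` with
`M` scalar or of characteristic polynomial `X ^ 2 - r X - s`, and the following bijections are
collineations: translations, `(x, y) ↦ (x A, y A)` for `A ∈ GL₂(F)` (it conjugates `M`), and the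
maps `rootSwap c`, which send `M ↦ r - M` by Cayley–Hamilton.

Two BF lines through a common point are moved by a translation to the origin and by one
`rootSwap` onto `y = x·(μ,0)` and `x = 0`; the marked point becomes `(w, μ w)` with `w ≠ 0`, and a
matrix `A` with `w A = (0, 1)` finishes. Two parallel BF lines have the same slope; one or two
`rootSwap`s make them horizontal, and a translation moves the marked point to `x = (0, 1)` and the
second line to `y = 0`.
-/

open Function Set

theorem image_eq_of_mapsTo {α β : Type*} [Finite β] {φ : α → β} (hφ : Injective φ)
    {ℓ : Set α} {ℓ' : Set β} (h : MapsTo φ ℓ ℓ') (hle : ℓ'.ncard ≤ ℓ.ncard) : φ '' ℓ = ℓ' :=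
  eq_of_subset_of_ncard_le h.image_subset (by rwa [ncard_image_of_injective _ hφ]) (toFinite _)

section HallPlane

variable {F : Type*}

theorem ncard_vertLine [Finite F] (c : F × F) : (vertLine c).ncard = Nat.card (F × F) := by
  have : vertLine c = range fun y : F × F => (c, y) := by
    ext P
    exact ⟨fun h => ⟨P.2, Prod.ext h.symm rfl⟩, by rintro ⟨y, rfl⟩; rfl⟩
  rw [this, ncard_range_of_injective fun y y' h => (Prod.ext_iff.1 h).2]

variable [Field F]

theorem sq_sub_mul_sub_ne_zero {r s : F} (hirr : Irreducible (X ^ 2 - C r * X - C s : F[X]))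
    (t : F) : t ^ 2 - r * t - s ≠ 0 := fun h => by
  have hdeg : (X ^ 2 - C r * X - C s : F[X]).degree = 2 := by compute_degree!
  have := degree_eq_one_of_irreducible_of_root hirr (x := t) (by simp [h])
  rw [hdeg] at this
  exact absurd this (by decide)

def rowMul (x : F × F) (M : Matrix (Fin 2) (Fin 2) F) : F × F :=
  (x.1 * M 0 0 + x.2 * M 1 0, x.1 * M 0 1 + x.2 * M 1 1)

theorem rowMul_add_left (x y : F × F) (M : Matrix (Fin 2) (Fin 2) F) :
    rowMul (x + y) M = rowMul x M + rowMul y M := by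
  simp only [rowMul, Prod.fst_add, Prod.snd_add, Prod.mk_add_mk, Prod.mk.injEq]
  constructor <;> ring

theorem rowMul_smul_left (a : F) (x : F × F) (M : Matrix (Fin 2) (Fin 2) F) :
    rowMul (a • x) M = a • rowMul x M := by
  simp only [rowMul, Prod.smul_fst, Prod.smul_snd, smul_eq_mul, Prod.smul_mk, Prod.mk.injEq]
  constructor <;> ring

theorem rowMul_sub_right (x : F × F) (M N : Matrix (Fin 2) (Fin 2) F) :
    rowMul x (M - N) = rowMul x M - rowMul x N := by
  simp only [rowMul, Matrix.sub_apply, Prod.mk_sub_mk, Prod.mk.injEq]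
  constructor <;> ring

theorem rowMul_smul_right (a : F) (x : F × F) (M : Matrix (Fin 2) (Fin 2) F) :
    rowMul x (a • M) = a • rowMul x M := by
  simp only [rowMul, Matrix.smul_apply, smul_eq_mul, Prod.smul_mk, Prod.mk.injEq]
  constructor <;> ring

theorem rowMul_one (x : F × F) : rowMul x 1 = x := by
  simp [rowMul]

theorem rowMul_smul_one (a : F) (x : F × F) : rowMul x (a • 1) = a • x := by
  rw [rowMul_smul_right, rowMul_one]

theorem rowMul_zero_right (x : F × F) : rowMul x 0 = 0 := by
  simpa using rowMul_smul_one (0 : F) x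

theorem rowMul_zero_left (M : Matrix (Fin 2) (Fin 2) F) : rowMul 0 M = 0 := by
  simpa using rowMul_smul_left 0 0 M

theorem rowMul_mul (x : F × F) (M N : Matrix (Fin 2) (Fin 2) F) :
    rowMul x (M * N) = rowMul (rowMul x M) N := by
  simp only [rowMul, Matrix.mul_apply, Fin.sum_univ_two, Prod.mk.injEq]
  constructor <;> ring

theorem rowMul_rowMul_inv {A : Matrix (Fin 2) (Fin 2) F} (hA : IsUnit A.det) (x : F × F) :
    rowMul (rowMul x A) A⁻¹ = x := by
  rw [← rowMul_mul, Matrix.mul_nonsing_inv A hA, rowMul_one]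

theorem exists_rowMul_eq_of_ne_zero {w : F × F} (hw : w ≠ 0) :
    ∃ A : Matrix (Fin 2) (Fin 2) F, IsUnit A.det ∧ rowMul w A = (0, 1) := by
  by_cases h1 : w.1 = 0
  · have h2 : w.2 ≠ 0 := fun h2 => hw (Prod.ext h1 h2)
    exact ⟨!![1, 0; 0, w.2⁻¹], by simpa [Matrix.det_fin_two] using h2, by simp [rowMul, h1, h2]⟩
  · exact ⟨!![-w.2, w.1⁻¹; w.1, 0], by simp [Matrix.det_fin_two, h1],
      Prod.ext (by simp [rowMul, mul_comm]) (by simp [rowMul, h1])⟩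

theorem inv_mul_smul_one_mul {A : Matrix (Fin 2) (Fin 2) F} (hA : IsUnit A.det) (μ : F) :
    A⁻¹ * (μ • 1) * A = μ • 1 := by
  rw [Matrix.mul_smul, Matrix.mul_one, Matrix.smul_mul, Matrix.nonsing_inv_mul A hA]

theorem mul_self_eq_of_trace_det {r s : F} {M : Matrix (Fin 2) (Fin 2) F}
    (htr : M.trace = r) (hdet : M.det = -s) : M * M = r • M + s • 1 := by
  have h := Matrix.aeval_self_charpoly M
  rw [Matrix.charpoly_fin_two, htr, hdet] at h
  simp only [map_add, map_sub, map_mul, map_pow, aeval_X, aeval_C,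
    Algebra.algebraMap_eq_smul_one] at h
  rw [← sub_eq_zero, ← h]
  simp only [sq, Algebra.smul_mul_assoc, one_mul, neg_smul]
  module

theorem sub_smul_one_mul_smul_one_sub {r s : F} {M : Matrix (Fin 2) (Fin 2) F}
    (htr : M.trace = r) (hdet : M.det = -s) (c : F) :
    (M - c • 1) * (r • 1 - M) = c • M - (r * c + s) • 1 := by
  simp only [sub_mul, mul_sub, Matrix.smul_mul, Matrix.mul_smul, Matrix.one_mul, Matrix.mul_one,
    mul_self_eq_of_trace_det htr hdet, smul_smul]
  module

theorem trace_det_smul_one_sub {r s : F} {M : Matrix (Fin 2) (Fin 2) F} (htr : M.trace = r)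
    (hdet : M.det = -s) : (r • 1 - M).trace = r ∧ (r • 1 - M).det = -s := by
  rw [Matrix.trace_fin_two] at htr ⊢
  rw [Matrix.det_fin_two] at hdet ⊢
  simp only [Matrix.sub_apply, Matrix.smul_apply, Matrix.one_apply_eq, Matrix.one_apply_ne,
    smul_eq_mul, ne_eq, zero_ne_one, one_ne_zero, not_false_eq_true, mul_one, mul_zero, zero_sub]
  exact ⟨by linear_combination -htr, by linear_combination hdet - r * htr⟩

def IsHallSlope (r s : F) (M : Matrix (Fin 2) (Fin 2) F) : Prop :=
  (∃ μ : F, M = μ • 1) ∨ (M.trace = r ∧ M.det = -s)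

theorem IsHallSlope.conj {r s : F} {M : Matrix (Fin 2) (Fin 2) F} (hM : IsHallSlope r s M)
    {A : Matrix (Fin 2) (Fin 2) F} (hA : IsUnit A.det) : IsHallSlope r s (A⁻¹ * M * A) := by
  have hA' : IsUnit A := (Matrix.isUnit_iff_isUnit_det A).2 hA
  rcases hM with ⟨μ, rfl⟩ | ⟨htr, hdet⟩
  · exact Or.inl ⟨μ, inv_mul_smul_one_mul hA μ⟩
  · exact Or.inr ⟨(Matrix.trace_conj' hA' M).trans htr, (Matrix.det_conj' hA' M).trans hdet⟩

def matLine (M : Matrix (Fin 2) (Fin 2) F) (k : F × F) : Set ((F × F) × (F × F)) :=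
  {P | P.2 = rowMul P.1 M + k}

theorem ncard_matLine [Finite F] (M : Matrix (Fin 2) (Fin 2) F) (k : F × F) :
    (matLine M k).ncard = Nat.card (F × F) := by
  have : matLine M k = range fun x : F × F => (x, rowMul x M + k) := by
    ext P
    exact ⟨fun h => ⟨P.1, Prod.ext rfl h.symm⟩, by rintro ⟨x, rfl⟩; rfl⟩
  rw [this, ncard_range_of_injective fun x x' h => (Prod.ext_iff.1 h).1]

theorem vertLine_inter_matLine_nonempty (c : F × F) (M : Matrix (Fin 2) (Fin 2) F) (k : F × F) :
    (vertLine c ∩ matLine M k).Nonempty :=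
  ⟨(c, rowMul c M + k), rfl, rfl⟩

theorem matLine_smul_one_inter_nonempty {μ ν : F} (h : μ ≠ ν) (k k' : F × F) :
    (matLine (μ • 1) k ∩ matLine (ν • 1) k').Nonempty := by
  have h' : (μ - ν) * (μ - ν)⁻¹ = 1 := mul_inv_cancel₀ (sub_ne_zero.2 h)
  refine ⟨((μ - ν)⁻¹ • (k' - k), μ • (μ - ν)⁻¹ • (k' - k) + k), ?_, ?_⟩ <;>
    simp only [matLine, mem_ofPred_eq, rowMul_smul_one]
  linear_combination (norm := module) h' • (k' - k)

def coordAct (A : Matrix (Fin 2) (Fin 2) F) (P : (F × F) × (F × F)) : (F × F) × (F × F) :=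
  (rowMul P.1 A, rowMul P.2 A)

theorem coordAct_injective {A : Matrix (Fin 2) (Fin 2) F} (hA : IsUnit A.det) :
    Injective (coordAct A) := fun P Q h => by
  simp only [coordAct, Prod.mk.injEq] at h
  exact Prod.ext (by rw [← rowMul_rowMul_inv hA P.1, h.1, rowMul_rowMul_inv hA])
    (by rw [← rowMul_rowMul_inv hA P.2, h.2, rowMul_rowMul_inv hA])

theorem image_coordAct_vertLine [Finite F] {A : Matrix (Fin 2) (Fin 2) F} (hA : IsUnit A.det)
    (c : F × F) : coordAct A '' vertLine c = vertLine (rowMul c A) :=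
  image_eq_of_mapsTo (coordAct_injective hA) (fun P (hP : P.1 = c) => by
    simp [vertLine, coordAct, hP]) (by rw [ncard_vertLine, ncard_vertLine])

theorem image_coordAct_matLine [Finite F] {A : Matrix (Fin 2) (Fin 2) F} (hA : IsUnit A.det)
    (M : Matrix (Fin 2) (Fin 2) F) (k : F × F) :
    coordAct A '' matLine M k = matLine (A⁻¹ * M * A) (rowMul k A) :=
  image_eq_of_mapsTo (coordAct_injective hA) (fun P (hP : P.2 = rowMul P.1 M + k) => by
    simp only [matLine, coordAct, mem_ofPred_eq, hP, rowMul_add_left, ← rowMul_mul,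
      ← Matrix.mul_assoc, Matrix.mul_nonsing_inv A hA, Matrix.one_mul])
    (by rw [ncard_matLine, ncard_matLine])

theorem image_add_right_vertLine [Finite F] (T : (F × F) × (F × F)) (c : F × F) :
    (· + T) '' vertLine c = vertLine (c + T.1) :=
  image_eq_of_mapsTo (add_left_injective T) (fun P (hP : P.1 = c) => by
    simp [vertLine, hP]) (by rw [ncard_vertLine, ncard_vertLine])

theorem image_add_right_matLine [Finite F] (T : (F × F) × (F × F))
    (M : Matrix (Fin 2) (Fin 2) F) (k : F × F) :
    (· + T) '' matLine M k = matLine M (k + T.2 - rowMul T.1 M) :=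
  image_eq_of_mapsTo (add_left_injective T) (fun P (hP : P.2 = rowMul P.1 M + k) => by
    simp only [matLine, mem_ofPred_eq, Prod.fst_add, Prod.snd_add, hP, rowMul_add_left]
    abel) (by rw [ncard_matLine, ncard_matLine])

/-- On slopes `rootSwap r s c` acts as the Möbius map `t ↦ (c t - r c - s) / (t - c)`, which sends
`c` to `∞` and interchanges the two roots of `X ^ 2 - r X - s`. -/
def rootSwap (r s c : F) (P : (F × F) × (F × F)) : (F × F) × (F × F) :=
  (P.2 - c • P.1, c • P.2 - (r * c + s) • P.1)

section rootSwap

variable {r s c : F}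

theorem rootSwap_rootSwap (P : (F × F) × (F × F)) :
    rootSwap r s c (rootSwap r s c P) = (c ^ 2 - r * c - s) • P := by
  ext1 <;> simp only [rootSwap, Prod.smul_fst, Prod.smul_snd] <;> module

theorem rootSwap_injective (hc : c ^ 2 - r * c - s ≠ 0) : Injective (rootSwap r s c) :=
  fun P Q h => by
    have := congrArg (rootSwap r s c) h
    rwa [rootSwap_rootSwap, rootSwap_rootSwap, smul_right_inj hc] at this

variable [Finite F]

theorem image_rootSwap_vertLine (hc : c ^ 2 - r * c - s ≠ 0) (k : F × F) :
    rootSwap r s c '' vertLine k = matLine (c • 1) ((c ^ 2 - r * c - s) • k) :=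
  image_eq_of_mapsTo (rootSwap_injective hc) (fun P (hP : P.1 = k) => by
    simp only [matLine, rootSwap, mem_ofPred_eq, rowMul_smul_one, hP]
    module) (by rw [ncard_vertLine, ncard_matLine])

theorem image_rootSwap_matLine_self (hc : c ^ 2 - r * c - s ≠ 0) (k : F × F) :
    rootSwap r s c '' matLine (c • 1) k = vertLine k :=
  image_eq_of_mapsTo (rootSwap_injective hc) (fun P (hP : P.2 = rowMul P.1 (c • 1) + k) => by
    simp [vertLine, rootSwap, hP, rowMul_smul_one]) (by rw [ncard_matLine, ncard_vertLine])

theorem image_rootSwap_matLine_smul_one (hc : c ^ 2 - r * c - s ≠ 0) {μ : F} (hμ : μ ≠ c)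
    (k : F × F) :
    rootSwap r s c '' matLine (μ • 1) k =
      matLine (((c * μ - r * c - s) / (μ - c)) • 1) ((c - (c * μ - r * c - s) / (μ - c)) • k) :=
  image_eq_of_mapsTo (rootSwap_injective hc) (fun P (hP : P.2 = rowMul P.1 (μ • 1) + k) => by
    have h : (c * μ - r * c - s) / (μ - c) * (μ - c) = c * μ - r * c - s :=
      div_mul_cancel₀ _ (sub_ne_zero.2 hμ)
    simp only [matLine, rootSwap, mem_ofPred_eq, rowMul_smul_one, hP]
    linear_combination (norm := module) (-h) • P.1) (by rw [ncard_matLine, ncard_matLine])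

theorem image_rootSwap_matLine_of_trace_det (hc : c ^ 2 - r * c - s ≠ 0)
    {M : Matrix (Fin 2) (Fin 2) F} (htr : M.trace = r) (hdet : M.det = -s) (k : F × F) :
    rootSwap r s c '' matLine M k = matLine (r • 1 - M) (c • k - rowMul k (r • 1 - M)) :=
  image_eq_of_mapsTo (rootSwap_injective hc) (fun P (hP : P.2 = rowMul P.1 M + k) => by
    have key : rowMul (rowMul P.1 M - c • P.1) (r • 1 - M) =
        c • rowMul P.1 M - (r * c + s) • P.1 :=
      calc rowMul (rowMul P.1 M - c • P.1) (r • 1 - M)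
          _ = rowMul P.1 ((M - c • 1) * (r • 1 - M)) := by
            rw [rowMul_mul, rowMul_sub_right P.1, rowMul_smul_one]
          _ = c • rowMul P.1 M - (r * c + s) • P.1 := by
            rw [sub_smul_one_mul_smul_one_sub htr hdet, rowMul_sub_right, rowMul_smul_right,
              rowMul_smul_one]
    simp only [matLine, rootSwap, mem_ofPred_eq, hP]
    rw [add_sub_right_comm, rowMul_add_left, key]
    module) (by rw [ncard_matLine, ncard_matLine])

end rootSwap

variable [DecidableEq F]

def hallMatrix (r s : F) (m : F × F) : Matrix (Fin 2) (Fin 2) F :=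
  if m.2 = 0 then m.1 • 1 else !![m.1, m.2; -(m.2⁻¹ * (m.1 ^ 2 - r * m.1 - s)), r - m.1]

theorem hallMatrix_mk_zero (r s μ : F) : hallMatrix r s (μ, 0) = μ • 1 := by
  simp [hallMatrix]

theorem hallMul_eq_rowMul (r s : F) (x m : F × F) :
    hallMul r s x m = rowMul x (hallMatrix r s m) := by
  unfold hallMul hallMatrix
  split_ifs with h
  · rw [rowMul_smul_one]
    ext <;> simp [mul_comm]
  · simp only [rowMul, Matrix.of_apply, Matrix.cons_val', Matrix.cons_val_zero,
      Matrix.cons_val_fin_one, Matrix.cons_val_one, Prod.mk.injEq]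
    constructor <;> ring

theorem slopeLine_eq_matLine (r s : F) (m k : F × F) :
    slopeLine r s m k = matLine (hallMatrix r s m) k := by
  simp only [slopeLine, matLine, hallMul_eq_rowMul]

theorem slopeLine_mk_zero (r s μ : F) (k : F × F) :
    slopeLine r s (μ, 0) k = matLine (μ • 1) k := by
  rw [slopeLine_eq_matLine, hallMatrix_mk_zero]

theorem slopeLine_zero (r s : F) (k : F × F) : slopeLine r s 0 k = matLine 0 k := by
  rw [← Prod.mk_zero_zero, slopeLine_mk_zero, zero_smul]

theorem isHallSlope_hallMatrix (r s : F) (m : F × F) : IsHallSlope r s (hallMatrix r s m) := by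
  unfold hallMatrix
  split_ifs with h
  · exact Or.inl ⟨m.1, rfl⟩
  · right
    simp only [Matrix.trace_fin_two_of, Matrix.det_fin_two_of]
    constructor
    · ring
    · field_simp
      ring

theorem exists_hallMatrix_eq {r s : F} (hf : ∀ t : F, t ^ 2 - r * t - s ≠ 0)
    {M : Matrix (Fin 2) (Fin 2) F} (hM : IsHallSlope r s M) : ∃ m, hallMatrix r s m = M := by
  rcases hM with ⟨μ, rfl⟩ | ⟨htr, hdet⟩
  · exact ⟨(μ, 0), hallMatrix_mk_zero r s μ⟩
  rw [Matrix.trace_fin_two] at htr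
  rw [Matrix.det_fin_two] at hdet
  -- an upper triangular `M` would have the eigenvalue `M 0 0 ∈ F`
  have h01 : M 0 1 ≠ 0 := fun h => hf (M 0 0) (by
    rw [h] at hdet
    linear_combination M 0 0 * htr - hdet)
  refine ⟨(M 0 0, M 0 1), ?_⟩
  simp only [hallMatrix, h01, if_false]
  ext i j
  fin_cases i <;> fin_cases j
  · rfl
  · rfl
  · show -((M 0 1)⁻¹ * (M 0 0 ^ 2 - r * M 0 0 - s)) = M 1 0
    field_simp
    linear_combination hdet - M 0 0 * htr
  · show r - M 0 0 = M 1 1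
    linear_combination -htr

theorem isHallLine_matLine {r s : F} (hf : ∀ t : F, t ^ 2 - r * t - s ≠ 0)
    {M : Matrix (Fin 2) (Fin 2) F} (hM : IsHallSlope r s M) (k : F × F) :
    IsHallLine r s (matLine M k) := by
  obtain ⟨m, rfl⟩ := exists_hallMatrix_eq hf hM
  exact Or.inr ⟨m, k, (slopeLine_eq_matLine r s m k).symm⟩
theorem IsCollineation.comp {r s : F} {φ ψ : (F × F) × (F × F) → (F × F) × (F × F)}
    (hψ : IsCollineation r s ψ) (hφ : IsCollineation r s φ) : IsCollineation r s (ψ ∘ φ) :=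
  ⟨hψ.1.comp hφ.1, fun ℓ hℓ => by rw [image_comp]; exact hψ.2 _ (hφ.2 _ hℓ)⟩

theorem isCollineation_id (r s : F) : IsCollineation r s id :=
  ⟨bijective_id, fun ℓ hℓ => by rwa [image_id]⟩

theorem isCollineation_of_injective [Finite F] {r s : F}
    {φ : (F × F) × (F × F) → (F × F) × (F × F)} (hφ : Injective φ)
    (hvert : ∀ c, IsHallLine r s (φ '' vertLine c))
    (hslope : ∀ m k, IsHallLine r s (φ '' slopeLine r s m k)) : IsCollineation r s φ :=
  ⟨Finite.injective_iff_bijective.1 hφ, by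
    rintro ℓ (⟨c, rfl⟩ | ⟨m, k, rfl⟩)
    exacts [hvert c, hslope m k]⟩

theorem isCollineation_add_right [Finite F] (r s : F) (T : (F × F) × (F × F)) :
    IsCollineation r s (· + T) :=
  isCollineation_of_injective (add_left_injective T)
    (fun c => Or.inl ⟨_, image_add_right_vertLine T c⟩)
    (fun m k => Or.inr ⟨m, k + T.2 - rowMul T.1 (hallMatrix r s m), by
      rw [slopeLine_eq_matLine, slopeLine_eq_matLine, image_add_right_matLine]⟩)

theorem isCollineation_coordAct [Finite F] {r s : F} (hf : ∀ t : F, t ^ 2 - r * t - s ≠ 0)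
    {A : Matrix (Fin 2) (Fin 2) F} (hA : IsUnit A.det) : IsCollineation r s (coordAct A) :=
  isCollineation_of_injective (coordAct_injective hA)
    (fun c => Or.inl ⟨_, image_coordAct_vertLine hA c⟩)
    (fun m k => by
      rw [slopeLine_eq_matLine, image_coordAct_matLine hA]
      exact isHallLine_matLine hf ((isHallSlope_hallMatrix r s m).conj hA) _)

theorem isCollineation_rootSwap [Finite F] {r s : F} (hf : ∀ t : F, t ^ 2 - r * t - s ≠ 0)
    (c : F) : IsCollineation r s (rootSwap r s c) := by
  refine isCollineation_of_injective (rootSwap_injective (hf c)) (fun k => ?_) (fun m k => ?_)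
  · rw [image_rootSwap_vertLine (hf c)]
    exact isHallLine_matLine hf (Or.inl ⟨c, rfl⟩) _
  rw [slopeLine_eq_matLine]
  rcases isHallSlope_hallMatrix r s m with ⟨μ, hμ⟩ | ⟨htr, hdet⟩
  · rw [hμ]
    rcases eq_or_ne μ c with rfl | hμc
    · exact Or.inl ⟨k, image_rootSwap_matLine_self (hf μ) k⟩
    · rw [image_rootSwap_matLine_smul_one (hf c) hμc]
      exact isHallLine_matLine hf (Or.inl ⟨_, rfl⟩) _
  · rw [image_rootSwap_matLine_of_trace_det (hf c) htr hdet]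
    exact isHallLine_matLine hf (Or.inr (trace_det_smul_one_sub htr hdet)) _

theorem mem_BFlines_iff {r s : F} {ℓ : Set ((F × F) × (F × F))} :
    ℓ ∈ BFlines r s ↔ (∃ c, ℓ = vertLine c) ∨ ∃ (μ : F) (k : F × F), ℓ = matLine (μ • 1) k := by
  refine or_congr_right ⟨?_, ?_⟩
  · rintro ⟨⟨μ, _⟩, k, rfl, rfl⟩
    exact ⟨μ, k, slopeLine_mk_zero r s μ k⟩
  · rintro ⟨μ, k, rfl⟩
    exact ⟨(μ, 0), k, rfl, (slopeLine_mk_zero r s μ k).symm⟩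

theorem image_add_neg_of_mem_BFlines [Finite F] {r s : F} {ℓ : Set ((F × F) × (F × F))}
    (hℓ : ℓ ∈ BFlines r s) {O : (F × F) × (F × F)} (hO : O ∈ ℓ) :
    (· + -O) '' ℓ = vertLine 0 ∨ ∃ μ : F, (· + -O) '' ℓ = matLine (μ • 1) 0 := by
  rcases mem_BFlines_iff.1 hℓ with ⟨c, rfl⟩ | ⟨μ, k, rfl⟩
  · left
    rw [image_add_right_vertLine, Prod.fst_neg, show O.1 = c from hO, add_neg_cancel]
  · right
    refine ⟨μ, ?_⟩
    rw [image_add_right_matLine, Prod.fst_neg, Prod.snd_neg, show O.2 = _ from hO]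
    simp [rowMul_smul_one]

theorem exists_collineation_axes_of_zero [Finite F] {r s : F}
    (hf : ∀ t : F, t ^ 2 - r * t - s ≠ 0) {ℓ₁ ℓ₂ : Set ((F × F) × (F × F))}
    (h₁ : ℓ₁ = vertLine 0 ∨ ∃ μ : F, ℓ₁ = matLine (μ • 1) 0)
    (h₂ : ℓ₂ = vertLine 0 ∨ ∃ μ : F, ℓ₂ = matLine (μ • 1) 0) (hne : ℓ₁ ≠ ℓ₂) :
    ∃ (μ : F) (ψ : (F × F) × (F × F) → (F × F) × (F × F)), IsCollineation r s ψ ∧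
      ψ '' ℓ₁ = matLine (μ • 1) 0 ∧ ψ '' ℓ₂ = vertLine 0 := by
  rcases h₁ with rfl | ⟨μ₁, rfl⟩ <;> rcases h₂ with rfl | ⟨μ₂, rfl⟩
  · exact absurd rfl hne
  · exact ⟨μ₂, rootSwap r s μ₂, isCollineation_rootSwap hf μ₂,
      by rw [image_rootSwap_vertLine (hf μ₂), smul_zero], image_rootSwap_matLine_self (hf μ₂) 0⟩
  · exact ⟨μ₁, id, isCollineation_id r s, image_id _, image_id _⟩
  · have hμ : μ₁ ≠ μ₂ := fun h => hne (h ▸ rfl)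
    exact ⟨_, rootSwap r s μ₂, isCollineation_rootSwap hf μ₂,
      by rw [image_rootSwap_matLine_smul_one (hf μ₂) hμ, smul_zero],
      image_rootSwap_matLine_self (hf μ₂) 0⟩

theorem exists_collineation_axes [Finite F] {r s : F} (hf : ∀ t : F, t ^ 2 - r * t - s ≠ 0)
    {ℓ₁ ℓ₂ : Set ((F × F) × (F × F))} (h₁ : ℓ₁ ∈ BFlines r s) (h₂ : ℓ₂ ∈ BFlines r s)
    (hne : ℓ₁ ≠ ℓ₂) (hmeet : (ℓ₁ ∩ ℓ₂).Nonempty) :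
    ∃ (μ : F) (ψ : (F × F) × (F × F) → (F × F) × (F × F)), IsCollineation r s ψ ∧
      ψ '' ℓ₁ = matLine (μ • 1) 0 ∧ ψ '' ℓ₂ = vertLine 0 := by
  obtain ⟨O, hO₁, hO₂⟩ := hmeet
  obtain ⟨μ, ψ, hψ, hψ₁, hψ₂⟩ := exists_collineation_axes_of_zero hf
    (image_add_neg_of_mem_BFlines h₁ hO₁) (image_add_neg_of_mem_BFlines h₂ hO₂)
    ((image_injective.2 (add_left_injective (-O))).ne hne)
  exact ⟨μ, ψ ∘ (· + -O), hψ.comp (isCollineation_add_right r s (-O)),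
    by rw [image_comp, hψ₁], by rw [image_comp, hψ₂]⟩

theorem exists_collineation_horizontal [Finite F] {r s : F}
    (hf : ∀ t : F, t ^ 2 - r * t - s ≠ 0) {ℓ₁ ℓ₂ : Set ((F × F) × (F × F))}
    (h₁ : ℓ₁ ∈ BFlines r s) (h₂ : ℓ₂ ∈ BFlines r s) (hdisj : ℓ₁ ∩ ℓ₂ = ∅) :
    ∃ ψ : (F × F) × (F × F) → (F × F) × (F × F), IsCollineation r s ψ ∧
      ∃ k₁ k₂ : F × F, ψ '' ℓ₁ = matLine 0 k₁ ∧ ψ '' ℓ₂ = matLine 0 k₂ := by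
  have hvert : ∀ c : F × F, rootSwap r s 0 '' vertLine c = matLine 0 (-s • c) := fun c => by
    rw [image_rootSwap_vertLine (hf 0)]
    simp
  rcases mem_BFlines_iff.1 h₁ with ⟨c₁, rfl⟩ | ⟨μ₁, k₁, rfl⟩ <;>
    rcases mem_BFlines_iff.1 h₂ with ⟨c₂, rfl⟩ | ⟨μ₂, k₂, rfl⟩
  · exact ⟨rootSwap r s 0, isCollineation_rootSwap hf 0, _, _, hvert c₁, hvert c₂⟩
  · exact absurd hdisj (vertLine_inter_matLine_nonempty _ _ _).ne_empty
  · exact absurd (inter_comm _ _ ▸ hdisj) (vertLine_inter_matLine_nonempty _ _ _).ne_empty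
  · obtain rfl : μ₁ = μ₂ := by
      by_contra h
      exact (matLine_smul_one_inter_nonempty h k₁ k₂).ne_empty hdisj
    refine ⟨rootSwap r s 0 ∘ rootSwap r s μ₁,
      (isCollineation_rootSwap hf 0).comp (isCollineation_rootSwap hf μ₁), -s • k₁, -s • k₂,
      ?_, ?_⟩ <;>
      rw [image_comp, image_rootSwap_matLine_self (hf μ₁), hvert]

end HallPlane

theorem BF_BF_normalization_general {F : Type*} [Field F] [Fintype F] [DecidableEq F]
    (r s : F)
    (hirr : Irreducible (X ^ 2 - C r * X - C s : F[X])) :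
    (∀ (ℓ1 ℓ2 : Set ((F × F) × (F × F))) (A1 : (F × F) × (F × F)),
      ℓ1 ∈ BFlines r s → ℓ2 ∈ BFlines r s → ℓ1 ≠ ℓ2 → (ℓ1 ∩ ℓ2).Nonempty →
      A1 ∈ ℓ1 → A1 ∉ ℓ2 →
      ∃ μ : F, ∃ φ, IsCollineation r s φ ∧
        φ '' ℓ1 = slopeLine r s (μ, 0) 0 ∧
        φ '' ℓ2 = vertLine ((0 : F × F)) ∧
        φ A1 = ((0, 1), (0, μ))) ∧
    (∀ (ℓ1 ℓ2 : Set ((F × F) × (F × F))) (A1 : (F × F) × (F × F)),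
      ℓ1 ∈ BFlines r s → ℓ2 ∈ BFlines r s → ℓ1 ≠ ℓ2 → ℓ1 ∩ ℓ2 = ∅ →
      A1 ∈ ℓ1 →
      ∃ κ : F × F, κ ≠ 0 ∧ ∃ φ, IsCollineation r s φ ∧
        φ '' ℓ1 = slopeLine r s 0 κ ∧
        φ '' ℓ2 = slopeLine r s 0 0 ∧
        φ A1 = ((0, 1), κ)) := by
  have hf := sq_sub_mul_sub_ne_zero hirr
  simp only [slopeLine_mk_zero, slopeLine_zero]
  refine ⟨fun ℓ₁ ℓ₂ A hℓ₁ hℓ₂ hne hmeet hA₁ hA₂ => ?_, fun ℓ₁ ℓ₂ A hℓ₁ hℓ₂ hne hdisj hA₁ => ?_⟩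
  · obtain ⟨μ, ψ, hψ, hψ₁, hψ₂⟩ := exists_collineation_axes hf hℓ₁ hℓ₂ hne hmeet
    have hon : ψ A ∈ matLine (μ • 1) 0 := hψ₁ ▸ mem_image_of_mem ψ hA₁
    rw [matLine, mem_ofPred_eq, rowMul_smul_one, add_zero] at hon
    have hoff : (ψ A).1 ≠ 0 := fun h => hA₂ (hψ.1.1.mem_set_image.1 (hψ₂ ▸ h))
    obtain ⟨B, hB, hw⟩ := exists_rowMul_eq_of_ne_zero hoff
    refine ⟨μ, coordAct B ∘ ψ, (isCollineation_coordAct hf hB).comp hψ, ?_, ?_, ?_⟩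
    · rw [image_comp, hψ₁, image_coordAct_matLine hB, inv_mul_smul_one_mul hB, rowMul_zero_left]
    · rw [image_comp, hψ₂, image_coordAct_vertLine hB, rowMul_zero_left]
    · simp [coordAct, hon, rowMul_smul_left, hw]
  · obtain ⟨ψ, hψ, k₁, k₂, hψ₁, hψ₂⟩ := exists_collineation_horizontal hf hℓ₁ hℓ₂ hdisj
    have hk : k₁ ≠ k₂ := fun h => hne (hψ.1.1.image_injective (by rw [hψ₁, hψ₂, h]))
    have hon : ψ A ∈ matLine 0 k₁ := hψ₁ ▸ mem_image_of_mem ψ hA₁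
    rw [matLine, mem_ofPred_eq, rowMul_zero_right, zero_add] at hon
    set T : (F × F) × (F × F) := ((0, 1) - (ψ A).1, -k₂)
    refine ⟨k₁ - k₂, sub_ne_zero.2 hk, (· + T) ∘ ψ, (isCollineation_add_right r s T).comp hψ,
      ?_, ?_, ?_⟩
    · rw [image_comp, hψ₁, image_add_right_matLine]
      simp [T, rowMul_zero_right, sub_eq_add_neg]
    · rw [image_comp, hψ₂, image_add_right_matLine]
      simp [T, rowMul_zero_right]
    · exact Prod.ext (by simp [T]) (by simp [T, hon, sub_eq_add_neg])

/-- Proposition (BF/BF): (i) any ordered pair of distinct intersecting BF lines, with a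
marked point `A1` on the first line and off the second, can be mapped by a collineation to
`(y = x·(μ,0), x = (0,0))` with `A1 ↦ ((0,1),(0,μ))` for some `μ ∈ F`; (ii) any ordered
pair of distinct parallel BF lines with a marked point `A1` on the first can be mapped to
`(y = κ, y = (0,0))` with `A1 ↦ ((0,1),κ)` for some `κ ≠ (0,0)`. -/
theorem BF_BF_normalization {F : Type*} [Field F] [Fintype F] [DecidableEq F]
    (q : ℕ) (hq : Fintype.card F = q) (r s : F)
    (hirr : Irreducible (X ^ 2 - C r * X - C s : F[X])) :
    (∀ (ℓ1 ℓ2 : Set ((F × F) × (F × F))) (A1 : (F × F) × (F × F)),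
      ℓ1 ∈ BFlines r s → ℓ2 ∈ BFlines r s → ℓ1 ≠ ℓ2 → (ℓ1 ∩ ℓ2).Nonempty →
      A1 ∈ ℓ1 → A1 ∉ ℓ2 →
      ∃ μ : F, ∃ φ, IsCollineation r s φ ∧
        φ '' ℓ1 = slopeLine r s (μ, 0) 0 ∧
        φ '' ℓ2 = vertLine ((0 : F × F)) ∧
        φ A1 = ((0, 1), (0, μ))) ∧
    (∀ (ℓ1 ℓ2 : Set ((F × F) × (F × F))) (A1 : (F × F) × (F × F)),
      ℓ1 ∈ BFlines r s → ℓ2 ∈ BFlines r s → ℓ1 ≠ ℓ2 → ℓ1 ∩ ℓ2 = ∅ →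
      A1 ∈ ℓ1 →
      ∃ κ : F × F, κ ≠ 0 ∧ ∃ φ, IsCollineation r s φ ∧
        φ '' ℓ1 = slopeLine r s 0 κ ∧
        φ '' ℓ2 = slopeLine r s 0 0 ∧
        φ A1 = ((0, 1), κ)) :=
  BF_BF_normalization_general r s hirr
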